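/- Let P : ℕ → ℝ_{>0} be any function. Then the set C_P of irrational α ∈ (0,1) for which there exists an odd n ≥ 3 with q_n > P(q_{n-1}), q_{n+1} > P(q_n), and q_{n+2} > P(q_{n+1}) (where q_k are the convergent denominators of α) is a dense open subset of (0,1)\ℚ (with its subspace topology). -/

import Mathlib

open scoped BigOperators

/-- The Gauss map `x ↦ 1/x - ⌊1/x⌋` (with `G 0 = 0`). -/
noncomputable def gaussMap (x : ℝ) : ℝ := if x = 0 then 0 else 1 / x - ⌊1 / x⌋

/-- Iterates `α_n = G^n(α)` of the Gauss map. -/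
noncomputable def alphaSeq (α : ℝ) (n : ℕ) : ℝ := gaussMap^[n] α

/-- Partial quotients `a_n` of the continued fraction of `α`. -/
noncomputable def aSeq (α : ℝ) : ℕ → ℤ
  | 0 => 0
  | n + 1 => ⌊1 / alphaSeq α n⌋

/-- Denominators `q_n` of the best rational approximations of `α`. -/
noncomputable def qSeq (α : ℝ) : ℕ → ℤ
  | 0 => 1
  | 1 => ⌊1 / α⌋
  | n + 2 => qSeq α n + aSeq α (n + 2) * qSeq α (n + 1)

/-- Numerators `p_n` of the best rational approximations of `α`. -/
noncomputable def pSeq (α : ℝ) : ℕ → ℤ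
  | 0 => 0
  | 1 => 1
  | n + 2 => pSeq α n + aSeq α (n + 2) * pSeq α (n + 1)

/-- The irrational numbers in `(0,1)`. -/
def Irr01 : Set ℝ := {x | x ∈ Set.Ioo (0 : ℝ) 1 ∧ Irrational x}

/-- The set `C_P` of irrational `α ∈ (0,1)` admitting an odd `n ≥ 3` with
`q_n > P(q_{n-1})`, `q_{n+1} > P(q_n)` and `q_{n+2} > P(q_{n+1})`. -/
noncomputable def Cset (P : ℕ → ℝ) : Set ℝ :=
  {α | ∃ n : ℕ, Odd n ∧ 3 ≤ n ∧
    P (qSeq α (n - 1)).toNat < (qSeq α n : ℝ) ∧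
    P (qSeq α n).toNat < (qSeq α (n + 1) : ℝ) ∧
    P (qSeq α (n + 1)).toNat < (qSeq α (n + 2) : ℝ)}

/-!
Openness: the Gauss map is continuous at irrational points, so the partial quotients `aₖ`, and
with them the denominators `qₖ`, are locally constant there.

Density: every irrational `α` equals `[a₁, …, a_N; α_N]`, and the Möbius map
`y ↦ [a₁, …, a_N; y]` has determinant `±1` and denominator at least `N` on `[0, 1]`, so it moves
points by at most `1 / N`. Replacing the tail `α_N` by one whose next three partial quotients
are large, each chosen after the denominator produced by the previous one (using `qₖ ≥ aₖ`),
gives a point of `C_P` within `1 / N` of `α`.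
-/

open Filter Topology Set

section GaussMap

lemma gaussMap_eq_fract {x : ℝ} (hx : x ≠ 0) : gaussMap x = Int.fract (1 / x) := if_neg hx

lemma Irrational.gaussMap {x : ℝ} (hx : Irrational x) : Irrational (gaussMap x) := by
  rw [gaussMap_eq_fract hx.ne_zero, Int.fract, one_div]
  exact hx.inv.sub_intCast _

lemma gaussMap_mem_Irr01 {x : ℝ} (hx : Irrational x) : gaussMap x ∈ Irr01 := by
  have hne := hx.gaussMap.ne_zero
  rw [gaussMap_eq_fract hx.ne_zero] at hne
  refine ⟨⟨?_, ?_⟩, hx.gaussMap⟩ <;> rw [gaussMap_eq_fract hx.ne_zero]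
  · exact (Int.fract_nonneg _).lt_of_ne' hne
  · exact Int.fract_lt_one _

lemma gaussMap_one_div_add {c : ℤ} (hc : 1 ≤ c) {t : ℝ} (ht : t ∈ Ico 0 1) :
    gaussMap (1 / (c + t)) = t := by
  have hct : (0 : ℝ) < c + t := by
    have : (1 : ℝ) ≤ c := by exact_mod_cast hc
    linarith [ht.1]
  rw [gaussMap_eq_fract (one_div_pos.2 hct).ne', one_div_one_div, Int.fract_intCast_add,
    Int.fract_eq_self.2 ht]

lemma floor_one_div_one_div_add (c : ℤ) {t : ℝ} (ht : t ∈ Ico 0 1) :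
    ⌊1 / (1 / (c + t))⌋ = c := by
  rw [one_div_one_div, Int.floor_intCast_add, Int.floor_eq_zero_iff.2 ht, add_zero]

end GaussMap

section Digits

variable {α β : ℝ}

lemma alphaSeq_succ (α : ℝ) (n : ℕ) : alphaSeq α (n + 1) = gaussMap (alphaSeq α n) :=
  Function.iterate_succ_apply' _ _ _

lemma alphaSeq_succ' (α : ℝ) (n : ℕ) : alphaSeq α (n + 1) = alphaSeq (gaussMap α) n :=
  Function.iterate_succ_apply _ _ _

lemma Irrational.alphaSeq (hα : Irrational α) : ∀ n, Irrational (alphaSeq α n)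
  | 0 => hα
  | n + 1 => by rw [alphaSeq_succ]; exact (hα.alphaSeq n).gaussMap

lemma alphaSeq_mem_Irr01 (hα : α ∈ Irr01) : ∀ n, alphaSeq α n ∈ Irr01
  | 0 => hα
  | n + 1 => by rw [alphaSeq_succ]; exact gaussMap_mem_Irr01 (hα.2.alphaSeq n)

lemma alphaSeq_succ_eq_sub (hα : Irrational α) (n : ℕ) :
    alphaSeq α (n + 1) = 1 / alphaSeq α n - aSeq α (n + 1) := by
  rw [alphaSeq_succ, gaussMap_eq_fract (hα.alphaSeq n).ne_zero]
  rfl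

lemma one_le_aSeq (hα : α ∈ Irr01) (n : ℕ) : 1 ≤ aSeq α (n + 1) := by
  obtain ⟨⟨h0, h1⟩, -⟩ := alphaSeq_mem_Irr01 hα n
  exact Int.le_floor.2 (by exact_mod_cast (one_lt_one_div h0 h1).le)

lemma qSeq_one (α : ℝ) : qSeq α 1 = aSeq α 1 := rfl

lemma qSeq_congr {N : ℕ} (h : ∀ k ≤ N, aSeq β k = aSeq α k) : ∀ k ≤ N, qSeq β k = qSeq α k
  | 0, _ => rfl
  | 1, hk => by rw [qSeq_one, qSeq_one, h 1 hk]
  | k + 2, hk => by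
    rw [qSeq, qSeq, h (k + 2) hk, qSeq_congr h k (by omega), qSeq_congr h (k + 1) (by omega)]

lemma one_le_qSeq (hα : α ∈ Irr01) : ∀ n, 1 ≤ qSeq α n
  | 0 => le_rfl
  | 1 => one_le_aSeq hα 0
  | n + 2 => by
    have := one_le_qSeq hα n
    have := one_le_qSeq hα (n + 1)
    have := one_le_aSeq hα (n + 1)
    rw [qSeq]
    nlinarith

lemma aSeq_le_qSeq (hα : α ∈ Irr01) : ∀ n, aSeq α n ≤ qSeq α n
  | 0 => zero_le_one
  | 1 => le_rfl
  | n + 2 => by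
    have := one_le_qSeq hα n
    have := one_le_qSeq hα (n + 1)
    have := one_le_aSeq hα (n + 1)
    rw [qSeq]
    nlinarith

end Digits

section LocalConstancy

variable {α : ℝ}

lemma Irrational.eventually_floor_eq {x : ℝ} (hx : Irrational x) : ∀ᶠ y in 𝓝 x, ⌊y⌋ = ⌊x⌋ := by
  filter_upwards [Ioo_mem_nhds ((Int.floor_le x).lt_of_ne (hx.ne_int _).symm)
    (Int.lt_floor_add_one x)] with y hy
  exact Int.floor_eq_iff.2 ⟨hy.1.le, hy.2⟩

lemma continuousAt_gaussMap {x : ℝ} (hx : Irrational x) : ContinuousAt gaussMap x := by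
  have hinv : ContinuousAt (fun y : ℝ => 1 / y) x :=
    continuousAt_const.div continuousAt_id hx.ne_zero
  have hfract : ContinuousAt Int.fract (1 / x) :=
    continuousAt_fract ((one_div x ▸ hx.inv).ne_int _)
  exact (hfract.comp hinv).congr
    ((eventually_ne_nhds hx.ne_zero).mono fun y hy => (gaussMap_eq_fract hy).symm)

lemma continuousAt_alphaSeq (hα : Irrational α) : ∀ n, ContinuousAt (alphaSeq · n) α
  | 0 => continuousAt_id
  | n + 1 => by
    simp only [alphaSeq_succ]
    exact ContinuousAt.comp (g := gaussMap) (continuousAt_gaussMap (hα.alphaSeq n))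
      (continuousAt_alphaSeq hα n)

lemma eventually_aSeq_eq (hα : Irrational α) : ∀ k, ∀ᶠ β in 𝓝 α, aSeq β k = aSeq α k
  | 0 => Eventually.of_forall fun _ => rfl
  | k + 1 => by
    have hinv : ContinuousAt (fun β => 1 / alphaSeq β k) α :=
      continuousAt_const.div (continuousAt_alphaSeq hα k) (hα.alphaSeq k).ne_zero
    exact hinv.eventually ((one_div (alphaSeq α k) ▸ (hα.alphaSeq k).inv).eventually_floor_eq)

lemma eventually_qSeq_eq (hα : Irrational α) (n : ℕ) : ∀ᶠ β in 𝓝 α, qSeq β n = qSeq α n :=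
  ((finite_Iic n).eventually_all.2 fun k _ => eventually_aSeq_eq hα k).mono
    fun _ h => qSeq_congr h n le_rfl

lemma Cset_mem_nhds (P : ℕ → ℝ) (hα : Irrational α) (hC : α ∈ Cset P) : Cset P ∈ 𝓝 α := by
  obtain ⟨n, hn, h3, h₁, h₂, h₃⟩ := hC
  filter_upwards [eventually_qSeq_eq hα (n - 1), eventually_qSeq_eq hα n,
    eventually_qSeq_eq hα (n + 1), eventually_qSeq_eq hα (n + 2)] with β e₀ e₁ e₂ e₃
  exact ⟨n, hn, h3, by rwa [e₀, e₁], by rwa [e₁, e₂], by rwa [e₂, e₃]⟩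

end LocalConstancy

noncomputable def cfEval (L : List ℤ) (y : ℝ) : ℝ := L.foldr (fun c t => 1 / (c + t)) y

section ContinuedFractions

variable {L : List ℤ} {x y : ℝ}

@[simp] lemma cfEval_nil (y : ℝ) : cfEval [] y = y := rfl

@[simp] lemma cfEval_cons (c : ℤ) (L : List ℤ) (y : ℝ) :
    cfEval (c :: L) y = 1 / (c + cfEval L y) := rfl

lemma cfEval_append (L₁ L₂ : List ℤ) (y : ℝ) :
    cfEval (L₁ ++ L₂) y = cfEval L₁ (cfEval L₂ y) := by
  simp [cfEval]

lemma cfEval_mem_Ioo (hL : ∀ c ∈ L, 1 ≤ c) (hy : y ∈ Ioo 0 1) : cfEval L y ∈ Ioo 0 1 := by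
  induction L with
  | nil => exact hy
  | cons c L ih =>
    obtain ⟨ht₀, -⟩ := ih fun d hd => hL d (List.mem_cons_of_mem c hd)
    have hc : (1 : ℝ) ≤ c := by exact_mod_cast hL c List.mem_cons_self
    rw [cfEval_cons]
    exact ⟨one_div_pos.2 (by linarith), (div_lt_one (by linarith)).2 (by linarith)⟩

lemma Irrational.cfEval (hy : Irrational y) (L : List ℤ) : Irrational (cfEval L y) := by
  induction L with
  | nil => exact hy
  | cons c L ih => rw [cfEval_cons, one_div]; exact (ih.intCast_add c).inv

lemma cfEval_mem_Irr01 (hL : ∀ c ∈ L, 1 ≤ c) (hy : y ∈ Irr01) : cfEval L y ∈ Irr01 :=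
  ⟨cfEval_mem_Ioo hL hy.1, hy.2.cfEval L⟩

lemma alphaSeq_cfEval (hL : ∀ c ∈ L, 1 ≤ c) (hy : y ∈ Ioo 0 1) :
    ∀ k ≤ L.length, alphaSeq (cfEval L y) k = cfEval (L.drop k) y := by
  induction L with
  | nil =>
    intro k hk
    obtain rfl : k = 0 := by simpa using hk
    rfl
  | cons c L ih =>
    intro k hk
    cases k with
    | zero => rfl
    | succ k =>
      have hL' : ∀ d ∈ L, 1 ≤ d := fun d hd => hL d (List.mem_cons_of_mem c hd)
      rw [alphaSeq_succ', cfEval_cons, gaussMap_one_div_add (hL c List.mem_cons_self)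
        (Ioo_subset_Ico_self (cfEval_mem_Ioo hL' hy)), List.drop_succ_cons]
      exact ih hL' k (by simpa using hk)

lemma aSeq_cfEval (hL : ∀ c ∈ L, 1 ≤ c) (hy : y ∈ Ioo 0 1) {k : ℕ} (hk : k < L.length) :
    aSeq (cfEval L y) (k + 1) = L[k] := by
  have hL' : ∀ d ∈ L.drop (k + 1), 1 ≤ d := fun d hd => hL d (List.mem_of_mem_drop hd)
  rw [aSeq, alphaSeq_cfEval hL hy k hk.le, List.drop_eq_getElem_cons hk, cfEval_cons,
    floor_one_div_one_div_add _ (Ioo_subset_Ico_self (cfEval_mem_Ioo hL' hy))]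

end ContinuedFractions

noncomputable def cfFrac (L : List ℤ) (y : ℝ) : ℝ × ℝ :=
  L.foldr (fun c pq => (pq.2, c * pq.2 + pq.1)) (y, 1)

section Convergents

variable {L : List ℤ} {x y : ℝ}

@[simp] lemma cfFrac_nil (y : ℝ) : cfFrac [] y = (y, 1) := rfl

@[simp] lemma cfFrac_cons (c : ℤ) (L : List ℤ) (y : ℝ) :
    cfFrac (c :: L) y = ((cfFrac L y).2, c * (cfFrac L y).2 + (cfFrac L y).1) := rfl

lemma cfFrac_bounds (hL : ∀ c ∈ L, 1 ≤ c) (hy : 0 ≤ y) :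
    0 ≤ (cfFrac L y).1 ∧ 1 ≤ (cfFrac L y).2 ∧
      (L.length : ℝ) + 1 ≤ (cfFrac L y).1 + (cfFrac L y).2 := by
  induction L with
  | nil => simpa using hy
  | cons c L ih =>
    obtain ⟨h₁, h₂, h₃⟩ := ih fun d hd => hL d (List.mem_cons_of_mem c hd)
    have hc : (1 : ℝ) ≤ c := by exact_mod_cast hL c List.mem_cons_self
    simp only [cfFrac_cons, List.length_cons, Nat.cast_succ]
    refine ⟨by linarith, by nlinarith, by nlinarith⟩

lemma length_le_cfFrac_snd (hL : ∀ c ∈ L, 1 ≤ c) (hy : 0 ≤ y) :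
    (L.length : ℝ) ≤ (cfFrac L y).2 := by
  cases L with
  | nil => simp
  | cons c L =>
    obtain ⟨h₁, h₂, h₃⟩ := cfFrac_bounds (fun d hd => hL d (List.mem_cons_of_mem c hd)) hy
    have hc : (1 : ℝ) ≤ c := by exact_mod_cast hL c List.mem_cons_self
    simp only [cfFrac_cons, List.length_cons, Nat.cast_succ]
    nlinarith

lemma cfEval_eq_div (hL : ∀ c ∈ L, 1 ≤ c) (hy : 0 ≤ y) :
    cfEval L y = (cfFrac L y).1 / (cfFrac L y).2 := by
  induction L with
  | nil => simp
  | cons c L ih =>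
    have hL' : ∀ d ∈ L, 1 ≤ d := fun d hd => hL d (List.mem_cons_of_mem c hd)
    have hq := (cfFrac_bounds hL' hy).2.1
    rw [cfEval_cons, ih hL', cfFrac_cons]
    field_simp

lemma abs_cfFrac_cross (L : List ℤ) (x y : ℝ) :
    |(cfFrac L y).1 * (cfFrac L x).2 - (cfFrac L y).2 * (cfFrac L x).1| = |y - x| := by
  induction L with
  | nil => simp
  | cons c L ih =>
    rw [← ih, cfFrac_cons, cfFrac_cons, ← abs_neg]
    ring_nf

lemma length_mul_abs_cfEval_sub_le (hL : ∀ c ∈ L, 1 ≤ c) (hx : x ∈ Icc 0 1) (hy : y ∈ Icc 0 1) :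
    L.length * |cfEval L y - cfEval L x| ≤ 1 := by
  obtain ⟨-, hqx, -⟩ := cfFrac_bounds hL hx.1
  obtain ⟨-, hqy, -⟩ := cfFrac_bounds hL hy.1
  have hlen := length_le_cfFrac_snd hL (y := y) hy.1
  have hxy : |y - x| ≤ 1 := abs_sub_le_iff.2 ⟨by linarith [hx.1, hy.2], by linarith [hx.2, hy.1]⟩
  have hdiff : |cfEval L y - cfEval L x| = |y - x| / ((cfFrac L y).2 * (cfFrac L x).2) := by
    rw [cfEval_eq_div hL hx.1, cfEval_eq_div hL hy.1,
      div_sub_div _ _ (by positivity) (by positivity), abs_div, abs_cfFrac_cross, abs_of_pos (by positivity : 0 < (cfFrac L y).2 * (cfFrac L x).2)]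
  rw [hdiff, mul_div_assoc', div_le_one (by positivity)]
  calc (L.length : ℝ) * |y - x| ≤ (cfFrac L y).2 * 1 := by gcongr
    _ ≤ (cfFrac L y).2 * (cfFrac L x).2 := by gcongr

end Convergents

noncomputable def cfDigits (α : ℝ) (N : ℕ) : List ℤ := (List.range N).map fun i => aSeq α (i + 1)

section Cylinders

variable {α β : ℝ} {N : ℕ}

@[simp] lemma length_cfDigits (α : ℝ) (N : ℕ) : (cfDigits α N).length = N := by simp [cfDigits]

lemma getElem_cfDigits {k : ℕ} (hk : k < (cfDigits α N).length) :
    (cfDigits α N)[k] = aSeq α (k + 1) := by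
  simp [cfDigits]

lemma one_le_of_mem_cfDigits (hα : α ∈ Irr01) : ∀ c ∈ cfDigits α N, 1 ≤ c := by
  simp only [cfDigits, List.mem_map, List.mem_range]
  rintro _ ⟨i, -, rfl⟩
  exact one_le_aSeq hα i

lemma cfDigits_succ (α : ℝ) (N : ℕ) : cfDigits α (N + 1) = cfDigits α N ++ [aSeq α (N + 1)] := by
  simp [cfDigits, List.range_succ]

lemma cfDigits_congr (h : ∀ k ≤ N, aSeq β k = aSeq α k) : cfDigits β N = cfDigits α N := by
  simp only [cfDigits, List.map_inj_left, List.mem_range]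
  exact fun i hi => h (i + 1) hi

lemma cfEval_cfDigits (hα : Irrational α) : ∀ N, cfEval (cfDigits α N) (alphaSeq α N) = α
  | 0 => rfl
  | N + 1 => by
    have hN : (aSeq α (N + 1) : ℝ) + alphaSeq α (N + 1) = 1 / alphaSeq α N := by
      rw [alphaSeq_succ_eq_sub hα]; ring
    rw [cfDigits_succ, cfEval_append, cfEval_cons, cfEval_nil, hN, one_div_one_div,
      cfEval_cfDigits hα N]

lemma natCast_mul_abs_sub_le_one_of_aSeq_eq (hα : α ∈ Irr01) (hβ : β ∈ Irr01)
    (h : ∀ k ≤ N, aSeq β k = aSeq α k) : N * |β - α| ≤ 1 := by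
  have hαN := (alphaSeq_mem_Irr01 hα N).1
  have hβN := (alphaSeq_mem_Irr01 hβ N).1
  have key := length_mul_abs_cfEval_sub_le (one_le_of_mem_cfDigits (N := N) hα)
    (Ioo_subset_Icc_self hαN) (Ioo_subset_Icc_self hβN)
  rwa [length_cfDigits, cfEval_cfDigits hα.2, ← cfDigits_congr h, cfEval_cfDigits hβ.2] at key

lemma exists_aSeq_eq_and_lt_aSeq_succ (hα : α ∈ Irr01) (N : ℕ) (x : ℝ) :
    ∃ β ∈ Irr01, (∀ k ≤ N, aSeq β k = aSeq α k) ∧ x < aSeq β (N + 1) := by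
  set M : ℤ := ⌊x⌋₊ + 1
  set L := cfDigits α N ++ [M]
  have hL : ∀ c ∈ L, 1 ≤ c := by
    simp only [L, List.mem_append, List.mem_singleton]
    rintro c (hc | rfl)
    · exact one_le_of_mem_cfDigits hα c hc
    · omega
  have hy := alphaSeq_mem_Irr01 hα N
  refine ⟨cfEval L (alphaSeq α N), cfEval_mem_Irr01 hL hy, ?_, ?_⟩
  · rintro (_ | k) hk
    · rfl
    · rw [aSeq_cfEval hL hy.1 (by simp [L]; omega), List.getElem_append_left (by simp; omega),
        getElem_cfDigits]
  · rw [aSeq_cfEval hL hy.1 (by simp [L]), List.getElem_append_right (by simp)]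
    simpa [M] using Nat.lt_floor_add_one x

end Cylinders

section Density

variable (P : ℕ → ℝ) {α : ℝ}

lemma mem_Cset_of_lt_aSeq (hα : α ∈ Irr01) {n : ℕ} (hn : Odd n) (h3 : 3 ≤ n)
    (h₁ : P (qSeq α (n - 1)).toNat < aSeq α n) (h₂ : P (qSeq α n).toNat < aSeq α (n + 1))
    (h₃ : P (qSeq α (n + 1)).toNat < aSeq α (n + 2)) : α ∈ Cset P := by
  have hq : ∀ k, (aSeq α k : ℝ) ≤ qSeq α k := fun k => by exact_mod_cast aSeq_le_qSeq hα k
  exact ⟨n, hn, h3, h₁.trans_le (hq n), h₂.trans_le (hq _), h₃.trans_le (hq _)⟩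

lemma exists_mem_Cset_aSeq_eq (hα : α ∈ Irr01) {N : ℕ} (hN : Even N) (h2 : 2 ≤ N) :
    ∃ β ∈ Irr01, (∀ k ≤ N, aSeq β k = aSeq α k) ∧ β ∈ Cset P := by
  obtain ⟨β₁, hβ₁, e₁, h₁⟩ := exists_aSeq_eq_and_lt_aSeq_succ hα N (P (qSeq α N).toNat)
  obtain ⟨β₂, hβ₂, e₂, h₂⟩ :=
    exists_aSeq_eq_and_lt_aSeq_succ hβ₁ (N + 1) (P (qSeq β₁ (N + 1)).toNat)
  obtain ⟨β₃, hβ₃, e₃, h₃⟩ :=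
    exists_aSeq_eq_and_lt_aSeq_succ hβ₂ (N + 2) (P (qSeq β₂ (N + 2)).toNat)
  have e₃₁ : ∀ k ≤ N + 1, aSeq β₃ k = aSeq β₁ k := fun k hk => by
    rw [e₃ k (by omega), e₂ k hk]
  have e₃₀ : ∀ k ≤ N, aSeq β₃ k = aSeq α k := fun k hk => by
    rw [e₃₁ k (by omega), e₁ k hk]
  refine ⟨β₃, hβ₃, e₃₀, mem_Cset_of_lt_aSeq P hβ₃ hN.add_one (by omega) ?_ ?_ ?_⟩
  · rwa [Nat.add_sub_cancel, qSeq_congr e₃₀ N le_rfl, e₃₁ (N + 1) le_rfl]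
  · rwa [qSeq_congr e₃₁ (N + 1) le_rfl, e₃ (N + 2) le_rfl]
  · rwa [qSeq_congr e₃ (N + 2) le_rfl]

lemma exists_mem_Cset_abs_sub_lt (hα : α ∈ Irr01) {r : ℝ} (hr : 0 < r) :
    ∃ β ∈ Irr01, |β - α| < r ∧ β ∈ Cset P := by
  obtain ⟨m, hm⟩ := exists_nat_gt (1 / r)
  obtain ⟨β, hβ, hagree, hC⟩ :=
    exists_mem_Cset_aSeq_eq P hα (N := 2 * m + 2) ⟨m + 1, by ring⟩ (by omega)
  have hbound := natCast_mul_abs_sub_le_one_of_aSeq_eq hα hβ hagree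
  have hNr : 1 < ((2 * m + 2 : ℕ) : ℝ) * r := by
    rw [div_lt_iff₀ hr] at hm
    push_cast
    nlinarith
  exact ⟨β, hβ, lt_of_mul_lt_mul_left (hbound.trans_lt hNr) (Nat.cast_nonneg _), hC⟩

end Density

theorem stmt6_general (P : ℕ → ℝ) :
    IsOpen {x : Irr01 | (x : ℝ) ∈ Cset P} ∧ Dense {x : Irr01 | (x : ℝ) ∈ Cset P} := by
  refine ⟨isOpen_iff_mem_nhds.2 fun α hα => ?_, Metric.dense_iff.2 fun α r hr => ?_⟩
  · exact continuous_subtype_val.continuousAt.preimage_mem_nhds (Cset_mem_nhds P α.2.2 hα)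
  · obtain ⟨β, hβ, hdist, hC⟩ := exists_mem_Cset_abs_sub_lt P α.2 hr
    exact ⟨⟨β, hβ⟩, by rwa [Metric.mem_ball, Subtype.dist_eq, Real.dist_eq], hC⟩

/-- For any `P : ℕ → ℝ_{>0}`, the set `C_P` is open and dense in the space of
irrationals of `(0,1)` (with its subspace topology). -/
theorem stmt6 (P : ℕ → ℝ) (hP : ∀ k, 0 < P k) :
    IsOpen {x : Irr01 | (x : ℝ) ∈ Cset P} ∧ Dense {x : Irr01 | (x : ℝ) ∈ Cset P} :=
  stmt6_general P
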